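/- arXiv:2007.02173 — 4 statements merged into one kernel-verified Lean document; each statement's English description precedes it below -/
import Mathlib

section
/- Let g be a complex reductive Lie algebra and x, y ∈ g. The following conditions are equivalent: (i) y lies in the center z(g^x) of the centralizer of x; (ii) g^x ⊆ g^y; (iii) [g, y] ⊆ [g, x]; (iv) z(g^y) ⊆ z(g^x). -/
def IsReductiveLie (R L : Type*) [CommRing R] [LieRing L] [LieAlgebra R L] : Prop :=
  LieAlgebra.radical R L = LieAlgebra.center R L

/-- The centralizer `g^x` of `x`, as a subset. -/
def cent {L : Type*} [LieRing L] (x : L) : Set L := {z : L | ⁅z, x⁆ = 0}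

/-- The center `z(g^x)` of the centralizer of `x`, as a subset. -/
def zcent {L : Type*} [LieRing L] (x : L) : Set L :=
  {y : L | ⁅y, x⁆ = 0 ∧ ∀ z : L, ⁅z, x⁆ = 0 → ⁅y, z⁆ = 0}

/-! Conditions (i), (ii) and (iv) are equivalent in any Lie ring, because `z(g^x)` is exactly
the set of `y` with `g^x ⊆ g^y`. For (ii) ↔ (iii), invariance and nondegeneracy of the form give
`ker (ad x) = (range (ad x))^⊥`, so taking orthogonals (an order-reversing involution in finite
dimension) turns `ker (ad x) ≤ ker (ad y)` into `range (ad y) ≤ range (ad x)`. -/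

open LieAlgebra

namespace LinearMap.BilinForm

theorem orthogonal_le_orthogonal_iff {K V : Type*} [Field K] [AddCommGroup V] [Module K V]
    [FiniteDimensional K V] {B : LinearMap.BilinForm K V} (hB : B.Nondegenerate)
    (hB₀ : B.IsRefl) {U W : Submodule K V} : B.orthogonal U ≤ B.orthogonal W ↔ W ≤ U := by
  refine ⟨fun h => ?_, orthogonal_le⟩
  have h' := orthogonal_le (B := B) h
  rwa [orthogonal_orthogonal hB hB₀, orthogonal_orthogonal hB hB₀] at h'

theorem lieInvariant_of_assoc {R L : Type*} [CommRing R] [LieRing L] [LieAlgebra R L]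
    {κ : LinearMap.BilinForm R L} (hκ : ∀ a b c : L, κ ⁅a, b⁆ c = κ a ⁅b, c⁆) :
    κ.lieInvariant L := fun x y z => by
  rw [← lie_skew, map_neg, LinearMap.neg_apply, hκ]

end LinearMap.BilinForm

section LieRing

variable {L : Type*} [LieRing L]

theorem lie_eq_zero_comm {a b : L} : ⁅a, b⁆ = 0 ↔ ⁅b, a⁆ = 0 := by
  rw [← lie_skew, neg_eq_zero]

theorem mem_zcent_iff_cent_subset_cent {x y : L} : y ∈ zcent x ↔ cent x ⊆ cent y := by
  refine ⟨fun ⟨_, hy⟩ z hz => lie_eq_zero_comm.mp (hy z hz), fun h => ⟨?_, ?_⟩⟩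
  · exact lie_eq_zero_comm.mp (h (lie_self x))
  · exact fun z hz => lie_eq_zero_comm.mp (h hz)

theorem zcent_subset_zcent_iff_cent_subset_cent {x y : L} :
    zcent y ⊆ zcent x ↔ cent x ⊆ cent y := by
  refine ⟨fun h => mem_zcent_iff_cent_subset_cent.mp (h ?_), fun h w hw => ?_⟩
  · exact mem_zcent_iff_cent_subset_cent.mpr subset_rfl
  · exact mem_zcent_iff_cent_subset_cent.mpr (h.trans (mem_zcent_iff_cent_subset_cent.mp hw))

end LieRing

section LieAlgebra

variable {R L : Type*} [CommRing R] [LieRing L] [LieAlgebra R L]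

theorem coe_ker_ad (x : L) : (LinearMap.ker (ad R L x) : Set L) = cent x := by
  ext z
  exact lie_eq_zero_comm

theorem range_ad_le_range_ad_iff {x y : L} :
    LinearMap.range (ad R L y) ≤ LinearMap.range (ad R L x) ↔
      ∀ a : L, ∃ b : L, ⁅a, y⁆ = ⁅b, x⁆ := by
  refine ⟨fun h a => ?_, fun h _ ⟨a, ha⟩ => ?_⟩
  · obtain ⟨b, hb⟩ := h ⟨-a, by rw [ad_apply, lie_neg, lie_skew]⟩
    exact ⟨-b, by rw [← hb, ad_apply, neg_lie, lie_skew]⟩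
  · obtain ⟨b, hb⟩ := h (-a)
    exact ⟨-b, by rw [← ha, ad_apply, ad_apply, lie_neg, lie_skew, ← hb, neg_lie, lie_skew]⟩

theorem ker_ad_eq_orthogonal_range_ad {κ : LinearMap.BilinForm R L}
    (hκ : κ.SeparatingRight) (hinv : κ.lieInvariant L) (x : L) :
    LinearMap.ker (ad R L x) = κ.orthogonal (LinearMap.range (ad R L x)) := by
  ext z
  have hκz : (∀ a : L, κ ⁅x, a⁆ z = 0) ↔ ⁅x, z⁆ = 0 := by
    simp only [fun a => show κ ⁅x, a⁆ z = -κ a ⁅x, z⁆ from hinv x a z, neg_eq_zero]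
    exact ⟨hκ _, fun h a => by rw [h, map_zero]⟩
  simp only [LinearMap.mem_ker, ad_apply, LinearMap.BilinForm.mem_orthogonal_iff,
    LinearMap.mem_range, forall_exists_index, forall_apply_eq_imp_iff]
  exact hκz.symm

end LieAlgebra

theorem cent_subset_cent_iff_forall_exists_lie_eq {K L : Type*} [Field K] [LieRing L]
    [LieAlgebra K L] [FiniteDimensional K L] {κ : LinearMap.BilinForm K L}
    (hnd : κ.Nondegenerate) (hrefl : κ.IsRefl) (hinv : κ.lieInvariant L) {x y : L} :
    cent x ⊆ cent y ↔ ∀ a : L, ∃ b : L, ⁅a, y⁆ = ⁅b, x⁆ := by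
  rw [← coe_ker_ad (R := K), ← coe_ker_ad (R := K), SetLike.coe_subset_coe,
    ker_ad_eq_orthogonal_range_ad hnd.2 hinv, ker_ad_eq_orthogonal_range_ad hnd.2 hinv,
    LinearMap.BilinForm.orthogonal_le_orthogonal_iff hnd hrefl, range_ad_le_range_ad_iff]

theorem double_centralizer_equivalences_general
    {L : Type*} [LieRing L] [LieAlgebra ℂ L] [Module.Finite ℂ L]
    (κ : L →ₗ[ℂ] L →ₗ[ℂ] ℂ)
    (hnondeg : ∀ x : L, (∀ y : L, κ x y = 0) → x = 0)
    (hsymm : ∀ a b : L, κ a b = κ b a)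
    (hinv : ∀ a b c : L, κ ⁅a, b⁆ c = κ a ⁅b, c⁆)
    (x y : L) :
    ((y ∈ zcent x) ↔ (cent x ⊆ cent y)) ∧
    ((cent x ⊆ cent y) ↔ (∀ a : L, ∃ b : L, ⁅a, y⁆ = ⁅b, x⁆)) ∧
    ((∀ a : L, ∃ b : L, ⁅a, y⁆ = ⁅b, x⁆) ↔ (zcent y ⊆ zcent x)) := by
  have hrefl : κ.IsRefl := fun a b h => by rwa [hsymm]
  have hnd : κ.Nondegenerate := hrefl.nondegenerate_iff_separatingLeft.mpr hnondeg
  have h23 := cent_subset_cent_iff_forall_exists_lie_eq hnd hrefl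
    (LinearMap.BilinForm.lieInvariant_of_assoc hinv) (x := x) (y := y)
  exact ⟨mem_zcent_iff_cent_subset_cent, h23,
    h23.symm.trans zcent_subset_zcent_iff_cent_subset_cent.symm⟩

/-- for `x, y` in a complex reductive Lie algebra, the following are equivalent:
(i) `y ∈ z(g^x)`; (ii) `g^x ⊆ g^y`; (iii) `[g, y] ⊆ [g, x]`; (iv) `z(g^y) ⊆ z(g^x)`. -/
theorem double_centralizer_equivalences
    {L : Type*} [LieRing L] [LieAlgebra ℂ L] [Module.Finite ℂ L]
    (hred : IsReductiveLie ℂ L)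
    (κ : L →ₗ[ℂ] L →ₗ[ℂ] ℂ)
    (hnondeg : ∀ x : L, (∀ y : L, κ x y = 0) → x = 0)
    (hsymm : ∀ a b : L, κ a b = κ b a)
    (hinv : ∀ a b c : L, κ ⁅a, b⁆ c = κ a ⁅b, c⁆)
    (x y : L) :
    ((y ∈ zcent x) ↔ (cent x ⊆ cent y)) ∧
    ((cent x ⊆ cent y) ↔ (∀ a : L, ∃ b : L, ⁅a, y⁆ = ⁅b, x⁆)) ∧
    ((∀ a : L, ∃ b : L, ⁅a, y⁆ = ⁅b, x⁆) ↔ (zcent y ⊆ zcent x)) :=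
  double_centralizer_equivalences_general κ hnondeg hsymm hinv x y
end

section
/- Let g be a complex reductive Z/m-graded Lie algebra with θ-group G₀, let g ∈ G₀ and x, y ∈ V = g₁. The following are equivalent: (i) g·g^x = g^y; (ii) g·z(g^x) = z(g^y); (iii) g·z(g^x)₁ = z(g^y)₁, where the subscript 1 denotes the degree-1 homogeneous component. -/
section Aux

variable {L : Type*} [LieRing L] [LieAlgebra ℂ L] (φ : L ≃ₗ⁅ℂ⁆ L)

lemma phizero : φ (0 : L) = 0 := φ.toLinearEquiv.map_zero

lemma phiinj : Function.Injective (⇑φ : L → L) := fun a b hab => by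
  have := congrArg φ.symm hab
  simpa using this

lemma phisurj : Function.Surjective (⇑φ : L → L) := fun w =>
  ⟨φ.symm w, φ.apply_symm_apply w⟩

lemma philie (a b : L) : ⁅φ a, φ b⁆ = (0 : L) ↔ ⁅a, b⁆ = 0 := by
  rw [← φ.map_lie]
  constructor
  · intro hh
    have := congrArg φ.symm hh
    rw [φ.symm_apply_apply] at this
    rw [this]
    have := congrArg φ.symm (phizero φ)
    simpa using this.symm
  · intro hh
    rw [hh]
    exact phizero φ

lemma cent_map (x : L) : φ '' cent x = cent (φ x) := by
  ext w
  obtain ⟨z, rfl⟩ := phisurj φ w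
  rw [(phiinj φ).mem_set_image]
  show z ∈ cent x ↔ ⁅φ z, φ x⁆ = 0
  rw [philie]
  rfl

lemma zcent_map (x : L) : φ '' zcent x = zcent (φ x) := by
  ext w
  obtain ⟨z, rfl⟩ := phisurj φ w
  rw [(phiinj φ).mem_set_image]
  show (⁅z, x⁆ = 0 ∧ ∀ u, ⁅u, x⁆ = 0 → ⁅z, u⁆ = 0) ↔
      (⁅φ z, φ x⁆ = 0 ∧ ∀ u, ⁅u, φ x⁆ = 0 → ⁅φ z, u⁆ = 0)
  rw [philie]
  refine and_congr Iff.rfl ⟨fun h2 u hu => ?_, fun h2 u hu => ?_⟩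
  · obtain ⟨v, rfl⟩ := phisurj φ u
    rw [philie] at hu ⊢
    exact h2 v hu
  · have := h2 (φ u) ((philie φ u x).mpr hu)
    exact (philie φ z u).mp this

end Aux

lemma zcent_eq_of_cent_eq {L : Type*} [LieRing L] {x y : L} (h : cent x = cent y) :
    zcent x = zcent y := by
  have hx : ∀ z : L, (⁅z, x⁆ = 0) ↔ (⁅z, y⁆ = 0) := fun z =>
    ⟨fun hz => by have : z ∈ cent y := h ▸ hz; exact this,
     fun hz => by have : z ∈ cent x := h.symm ▸ hz; exact this⟩
  ext w
  simp only [zcent, Set.mem_setOf_eq, hx]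

lemma self_mem_zcent {L : Type*} [LieRing L] (x : L) : x ∈ zcent x :=
  ⟨lie_self x, fun z hz => by rw [← lie_skew, hz, neg_zero]⟩

/-- If `a ∈ zcent b` then `cent b ⊆ cent a`. -/
lemma cent_subset_of_mem_zcent {L : Type*} [LieRing L] {a b : L} (h : a ∈ zcent b) :
    cent b ⊆ cent a := by
  intro z hz
  show ⁅z, a⁆ = 0
  rw [← lie_skew, h.2 z hz, neg_zero]

lemma cent_eq_of_zcent_eq {L : Type*} [LieRing L] {x y : L} (h : zcent x = zcent y) :
    cent x = cent y :=
  le_antisymm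
    (cent_subset_of_mem_zcent (h.symm ▸ self_mem_zcent y))
    (cent_subset_of_mem_zcent (h ▸ self_mem_zcent x))

/-- for `g ∈ G₀` (modelled by a Lie algebra automorphism `φ` preserving the
grading) and `x, y ∈ V = g₁`, the following are equivalent:
(i) `g·g^x = g^y`; (ii) `g·z(g^x) = z(g^y)`; (iii) `g·z(g^x)₁ = z(g^y)₁`. -/
theorem conjugate_centralizer_iff_center_iff_degree_one
    {L : Type*} [LieRing L] [LieAlgebra ℂ L] [Module.Finite ℂ L]
    (m : ℕ) [NeZero m]
    (hred : IsReductiveLie ℂ L)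
    (G : ZMod m → Submodule ℂ L)
    (hint : DirectSum.IsInternal G)
    (hbr : ∀ i j : ZMod m, ∀ x ∈ G i, ∀ y ∈ G j, ⁅x, y⁆ ∈ G (i + j))
    (hsym : ∀ l : ZMod m,
      Module.finrank ℂ (((LieAlgebra.center ℂ L).toSubmodule ⊓ G l : Submodule ℂ L)) =
      Module.finrank ℂ (((LieAlgebra.center ℂ L).toSubmodule ⊓ G (-l) : Submodule ℂ L)))
    (φ : L ≃ₗ⁅ℂ⁆ L)
    (hφ : ∀ l : ZMod m, φ '' (G l : Set L) = (G l : Set L))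
    (x y : L) (hx : x ∈ G 1) (hy : y ∈ G 1) :
    ((φ '' cent x = cent y) ↔ (φ '' zcent x = zcent y)) ∧
    ((φ '' zcent x = zcent y) ↔
      (φ '' (zcent x ∩ (G 1 : Set L)) = zcent y ∩ (G 1 : Set L))) := by
  have hx' : φ x ∈ G 1 := by
    rw [← SetLike.mem_coe, ← hφ 1]; exact ⟨x, hx, rfl⟩
  constructor
  · rw [cent_map, zcent_map]
    exact ⟨zcent_eq_of_cent_eq, fun h => cent_eq_of_zcent_eq h⟩
  · rw [zcent_map]
    have himg : φ '' (zcent x ∩ (G 1 : Set L)) = zcent (φ x) ∩ (G 1 : Set L) := by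
      rw [Set.image_inter (phiinj φ), zcent_map, hφ 1]
    rw [himg]
    constructor
    · intro h; rw [h]
    · intro h
      have h1 : φ x ∈ zcent y := by
        have hm : φ x ∈ zcent (φ x) ∩ (G 1 : Set L) := ⟨self_mem_zcent _, hx'⟩
        rw [h] at hm
        exact hm.1
      have h2 : y ∈ zcent (φ x) := by
        have hm : y ∈ zcent y ∩ (G 1 : Set L) := ⟨self_mem_zcent _, hy⟩
        rw [← h] at hm
        exact hm.1
      exact zcent_eq_of_cent_eq
        (le_antisymm (cent_subset_of_mem_zcent h2) (cent_subset_of_mem_zcent h1))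
end

section
/- Let g be a complex reductive Z/m-graded Lie algebra and let x ∈ V = g₁ be semisimple. Then the quantity dim g_l − dim g_l^x is independent of l ∈ Z/m, and consequently the dimension of the G-orbit of x equals m times the dimension of the G₀-orbit of x. -/
open Module LinearMap

section

variable {K V : Type*} [Field K] [AddCommGroup V] [Module K V]

theorem Module.End.IsSemisimple.disjoint_ker_range {f : End K V} (hf : f.IsSemisimple) :
    Disjoint (ker f) (range f) := by
  obtain ⟨q, hq, hcompl⟩ := End.isSemisimple_iff.mp hf (ker f) fun y hy => by simp_all
  rw [Submodule.disjoint_def]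
  rintro _ hker ⟨w, rfl⟩
  obtain ⟨k, hk, r, hr, rfl⟩ :=
    Submodule.mem_sup.mp (hcompl.sup_eq_top ▸ Submodule.mem_top (x := w))
  -- `q` is an `f`-invariant complement of `ker f`
  have hfr : f (k + r) ∈ q := by rw [map_add, mem_ker.mp hk, zero_add]; exact hq hr
  exact (Submodule.disjoint_def.mp hcompl.disjoint) _ hker hfr

theorem iSupIndep.finrank_iSup [FiniteDimensional K V] {ι : Type*} [Fintype ι] [DecidableEq ι]
    {p : ι → Submodule K V} (hp : iSupIndep p) :
    finrank K (⨆ i, p i : Submodule K V) = ∑ i, finrank K (p i) := by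
  rw [← DirectSum.range_coeLinearMap,
    finrank_range_of_inj (f := DirectSum.coeLinearMap p) hp.dfinsupp_lsum_injective,
    finrank_directSum]

theorem Submodule.finrank_map_add_finrank_inf_ker [FiniteDimensional K V] {W : Type*}
    [AddCommGroup W] [Module K W] (f : V →ₗ[K] W) (p : Submodule K V) :
    finrank K (p.map f) + finrank K (p ⊓ ker f : Submodule K V) = finrank K p := by
  have h := finrank_range_add_finrank_ker (f.domRestrict p)
  rwa [range_domRestrict, ker_domRestrict, ← Submodule.finrank_map_subtype_eq,
    Submodule.map_comap_subtype] at h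

theorem LinearMap.finrank_map_le_finrank_map_of_disjoint [FiniteDimensional K V]
    {f : End K V} (hf : Disjoint (ker f) (range f)) {p q : Submodule K V} (hpq : p.map f ≤ q) :
    finrank K (p.map f) ≤ finrank K (q.map f) := by
  have hinj : (p.map f ⊓ ker f : Submodule K V) = ⊥ :=
    (hf.symm.mono_left LinearMap.map_le_range).eq_bot
  have h := Submodule.finrank_map_add_finrank_inf_ker f (p.map f)
  rw [hinj, finrank_bot, add_zero] at h
  exact h ▸ Submodule.finrank_mono (Submodule.map_mono hpq)

theorem DirectSum.IsInternal.finrank_range_eq_sum [FiniteDimensional K V] {ι : Type*}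
    [AddGroup ι] [Fintype ι] [DecidableEq ι] {G : ι → Submodule K V} (hG : IsInternal G)
    {f : End K V} {d : ι} (hf : ∀ i, (G i).map f ≤ G (i + d)) :
    finrank K (range f) = ∑ i, finrank K ((G i).map f) := by
  have hrange : range f = ⨆ i, (G i).map f := by
    rw [range_eq_map, ← hG.submodule_iSup_eq_top, Submodule.map_iSup]
  rw [hrange, ((hG.submodule_iSupIndep.comp (add_left_injective d)).mono hf).finrank_iSup]

theorem ZMod.apply_eq_apply_of_le_apply_add_one {m : ℕ} [NeZero m] {α : Type*} [PartialOrder α]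
    {c : ZMod m → α} (hc : ∀ l, c l ≤ c (l + 1)) (l l' : ZMod m) : c l = c l' := by
  have hle_add : ∀ l (n : ℕ), c l ≤ c (l + n) := by
    intro l n
    induction n with
    | zero => simp
    | succ n ih => exact ih.trans (by simpa [add_assoc] using hc (l + n))
  have hle : ∀ l l', c l ≤ c l' := fun l l' => by simpa using hle_add l (l' - l).val
  exact (hle l l').antisymm (hle l' l)

end

theorem semisimple_codim_independent_and_orbit_dim_general
    {L : Type*} [LieRing L] [LieAlgebra ℂ L] [Module.Finite ℂ L]
    (m : ℕ) [NeZero m]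
    (G : ZMod m → Submodule ℂ L)
    (hint : DirectSum.IsInternal G)
    (hbr : ∀ i j : ZMod m, ∀ x ∈ G i, ∀ y ∈ G j, ⁅x, y⁆ ∈ G (i + j))
    (x : L) (hx : x ∈ G 1) (hss : (LieAlgebra.ad ℂ L x).IsSemisimple) :
    (∀ l l' : ZMod m,
      (Module.finrank ℂ (G l) : ℤ) -
        Module.finrank ℂ ((G l ⊓ LinearMap.ker (LieAlgebra.ad ℂ L x) : Submodule ℂ L)) =
      (Module.finrank ℂ (G l') : ℤ) -
        Module.finrank ℂ ((G l' ⊓ LinearMap.ker (LieAlgebra.ad ℂ L x) : Submodule ℂ L))) ∧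
    ((Module.finrank ℂ L : ℤ) - Module.finrank ℂ (LinearMap.ker (LieAlgebra.ad ℂ L x)) =
      m * ((Module.finrank ℂ (G 0) : ℤ) -
        Module.finrank ℂ ((G 0 ⊓ LinearMap.ker (LieAlgebra.ad ℂ L x) : Submodule ℂ L)))) := by
  set f := LieAlgebra.ad ℂ L x
  have hdeg (l : ZMod m) : (G l).map f ≤ G (l + 1) := by
    rintro _ ⟨y, hy, rfl⟩
    simpa [f, add_comm] using hbr 1 l x hx y hy
  have hcodim (l : ZMod m) : (finrank ℂ (G l) : ℤ) - finrank ℂ (G l ⊓ ker f : Submodule ℂ L) =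
      finrank ℂ ((G l).map f) := by
    have := Submodule.finrank_map_add_finrank_inf_ker f (G l)
    omega
  have hconst : ∀ l l' : ZMod m, finrank ℂ ((G l).map f) = finrank ℂ ((G l').map f) :=
    ZMod.apply_eq_apply_of_le_apply_add_one fun l =>
      finrank_map_le_finrank_map_of_disjoint hss.disjoint_ker_range (hdeg l)
  refine ⟨fun l l' => by rw [hcodim, hcodim, hconst l l'], ?_⟩
  have hrank := finrank_range_add_finrank_ker f
  rw [hint.finrank_range_eq_sum hdeg, Finset.sum_congr rfl fun l _ => hconst l 0,
    Finset.sum_const, Finset.card_univ, ZMod.card, smul_eq_mul] at hrank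
  rw [hcodim, ← hrank]
  push_cast
  ring

/-- for a semisimple `x ∈ V = g₁`, the codimension `dim g_l − dim g_l^x` is
independent of `l ∈ ℤ/m`, and `dim O^G_x = m · dim O^{G₀}_x`, where
`dim O^G_x = dim g − dim g^x` and `dim O^{G₀}_x = dim g₀ − dim g₀^x`. -/
theorem semisimple_codim_independent_and_orbit_dim
    {L : Type*} [LieRing L] [LieAlgebra ℂ L] [Module.Finite ℂ L]
    (m : ℕ) [NeZero m]
    (hred : IsReductiveLie ℂ L)
    (G : ZMod m → Submodule ℂ L)
    (hint : DirectSum.IsInternal G)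
    (hbr : ∀ i j : ZMod m, ∀ x ∈ G i, ∀ y ∈ G j, ⁅x, y⁆ ∈ G (i + j))
    (θ : L →ₗ⁅ℂ⁆ L)
    (hθ : ∀ l : ZMod m, ∀ x ∈ G l,
      θ x = Complex.exp (2 * Real.pi * Complex.I / m) ^ (l.val) • x)
    (κ : L →ₗ[ℂ] L →ₗ[ℂ] ℂ)
    (hnondeg : ∀ x : L, (∀ y : L, κ x y = 0) → x = 0)
    (hinv : ∀ a b c : L, κ ⁅a, b⁆ c = κ a ⁅b, c⁆)
    (hθinv : ∀ a b : L, κ (θ a) (θ b) = κ a b)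
    (horth : ∀ z ∈ LieAlgebra.center ℂ L, ∀ s ∈ LieAlgebra.derivedSeries ℂ L 1, κ z s = 0)
    (x : L) (hx : x ∈ G 1) (hss : (LieAlgebra.ad ℂ L x).IsSemisimple) :
    (∀ l l' : ZMod m,
      (Module.finrank ℂ (G l) : ℤ) -
        Module.finrank ℂ ((G l ⊓ LinearMap.ker (LieAlgebra.ad ℂ L x) : Submodule ℂ L)) =
      (Module.finrank ℂ (G l') : ℤ) -
        Module.finrank ℂ ((G l' ⊓ LinearMap.ker (LieAlgebra.ad ℂ L x) : Submodule ℂ L))) ∧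
    ((Module.finrank ℂ L : ℤ) - Module.finrank ℂ (LinearMap.ker (LieAlgebra.ad ℂ L x)) =
      m * ((Module.finrank ℂ (G 0) : ℤ) -
        Module.finrank ℂ ((G 0 ⊓ LinearMap.ker (LieAlgebra.ad ℂ L x) : Submodule ℂ L)))) :=
  semisimple_codim_independent_and_orbit_dim_general m G hint hbr x hx hss
end

section
/- Let g be a complex semisimple Z/m-graded Lie algebra with homogeneous Cartan subalgebra h satisfying h₀ = h ∩ g₀ = 0. Then no proper parabolic subalgebra p of g containing h with g_α ⊆ p for all α with α(Z) ≥ 0 (where Z is the grading element of the associated ℤ-grading of g with p = g(≥0)) is θ-stable. -/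
/-!
Averaging over the powers of `θ` projects onto `g₀`, so, as `Z ∈ 𝔥` and `𝔥 ∩ g₀ = 0`, the
`θ`-orbit of `Z` sums to zero. If `θ` stabilised `p = g(≥ 0)`, it would induce automorphisms
of `g / p` conjugating the map induced by `ad Z` to those induced by the `ad (θᵏ Z)`; hence
`m · tr_{g/p} (ad Z) = tr_{g/p} (ad (∑ₖ θᵏ Z)) = 0`. But the eigenvalues of `ad Z` on
`g / p ≠ 0` are negative integers, so this trace has negative real part.
-/

open Module LinearMap Finset

theorem IsPrimitiveRoot.geom_sum_pow_eq_zero {K : Type*} [Field K] {ζ : K} {m : ℕ}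
    (hζ : IsPrimitiveRoot ζ m) {l : ℕ} (hl0 : l ≠ 0) (hlm : l < m) :
    ∑ k ∈ range m, (ζ ^ l) ^ k = 0 := by
  have hne : ζ ^ l ≠ 1 := fun h =>
    hl0 (Nat.eq_zero_of_dvd_of_lt ((hζ.pow_eq_one_iff_dvd l).1 h) hlm)
  rw [geom_sum_eq hne, ← pow_mul, mul_comm, pow_mul, hζ.pow_eq_one, one_pow, sub_self, zero_div]

theorem sum_pow_apply_mem_zero {K V : Type*} [Field K] [AddCommGroup V] [Module K V]
    {m : ℕ} [NeZero m] {G : ZMod m → Submodule K V} (hG : ⨆ l, G l = ⊤)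
    {ζ : K} (hζ : IsPrimitiveRoot ζ m) {T : End K V}
    (hT : ∀ l, ∀ x ∈ G l, T x = ζ ^ l.val • x) (x : V) :
    ∑ k ∈ range m, (T ^ k) x ∈ G 0 := by
  have hx : x ∈ ⨆ l, G l := hG ▸ Submodule.mem_top
  induction hx using Submodule.iSup_induction' with
  | mem l y hy =>
    have hpow : ∀ k, (T ^ k) y = (ζ ^ l.val) ^ k • y := fun k => by
      induction k with
      | zero => simp
      | succ k ih =>
        rw [pow_succ', Module.End.mul_apply, ih, map_smul, hT l y hy, smul_smul, pow_succ]
    simp_rw [hpow, ← sum_smul]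
    by_cases hl : l = 0
    · subst hl
      exact (G 0).smul_mem _ hy
    · rw [hζ.geom_sum_pow_eq_zero ((ZMod.val_ne_zero l).2 hl) l.val_lt, zero_smul]
      exact (G 0).zero_mem
  | zero => simp
  | add y z _ _ hy hz => simpa [sum_add_distrib] using (G 0).add_mem hy hz

theorem LieAlgebra.conj_pow_ad {R L : Type*} [CommRing R] [LieRing L] [LieAlgebra R L]
    (θ : L ≃ₗ⁅R⁆ L) (k : ℕ) (x : L) :
    ((θ : L ≃ₗ[R] L) ^ k).conj (ad R L x) = ad R L (((θ : L ≃ₗ[R] L) ^ k) x) := by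
  induction k generalizing x with
  | zero => rfl
  | succ k ih =>
    rw [pow_succ, LinearEquiv.mul_eq_trans, ← LinearEquiv.conj_trans, LinearEquiv.trans_apply,
      LieAlgebra.conj_ad_apply, ih]
    rfl

namespace Submodule

variable {K V : Type*} [Field K] [AddCommGroup V] [Module K V]

theorem iSup_eigenspace_le_comap {ι : Type*} (f : End K V) (χ : ι → K) :
    ⨆ i, f.eigenspace (χ i) ≤ (⨆ i, f.eigenspace (χ i)).comap f :=
  iSup_le fun i x hx => mem_iSup_of_mem i (by simp_all [smul_smul])

theorem le_comap_conj (p : Submodule K V) {e : V ≃ₗ[K] V} (he : p.map (e : V →ₗ[K] V) = p)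
    {f : End K V} (hf : p ≤ p.comap f) : p ≤ p.comap (e.conj f) := by
  intro x hx
  have hx' : e.symm x ∈ p := by
    rw [← he] at hx
    obtain ⟨y, hy, rfl⟩ := hx
    simpa using hy
  rw [mem_comap, LinearEquiv.conj_apply_apply]
  exact he ▸ mem_map_of_mem (hf hx')

theorem trace_mapQ_conj (p : Submodule K V) {e : V ≃ₗ[K] V} (he : p.map (e : V →ₗ[K] V) = p)
    {f : End K V} (hf : p ≤ p.comap f) :
    trace K (V ⧸ p) (p.mapQ p (e.conj f) (p.le_comap_conj he hf)) =
      trace K (V ⧸ p) (p.mapQ p f hf) := by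
  have : p.mapQ p (e.conj f) (p.le_comap_conj he hf) =
      (Quotient.equiv p p e he).conj (p.mapQ p f hf) := by
    ext x
    simp [LinearEquiv.conj_apply_apply, Quotient.equiv_symm]
  rw [this, trace_conj']

theorem exists_eq_not_le_of_mem_spectrum_mapQ [FiniteDimensional K V] {ι : Type*}
    {f : End K V} (χ : ι → K) (hf : ⨆ i, f.eigenspace (χ i) = ⊤) (p : Submodule K V)
    (hfp : p ≤ p.comap f) {μ : K} (hμ : μ ∈ spectrum K (p.mapQ p f hfp)) :
    ∃ i, μ = χ i ∧ ¬ f.eigenspace (χ i) ≤ p := by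
  by_contra! h
  set g := algebraMap K (End K (V ⧸ p)) μ - p.mapQ p f hfp
  have hle : ⊤ ≤ (range g).comap p.mkQ := by
    rw [← hf]
    refine iSup_le fun i y hy => ?_
    rw [End.mem_eigenspace_iff] at hy
    by_cases hμi : μ = χ i
    · simp [(Quotient.mk_eq_zero p).2 (h i hμi (End.mem_eigenspace_iff.2 hy))]
    · -- on the `χ i`-eigenspace, `μ - f` is the nonzero scalar `μ - χ i`
      refine ⟨Quotient.mk ((μ - χ i)⁻¹ • y), ?_⟩
      simp [g, hy, ← sub_smul, smul_smul, inv_mul_cancel₀ (sub_ne_zero.2 hμi)]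
  refine hμ ((isUnit_iff_range_eq_top g).2 (eq_top_iff.2 fun x _ => ?_))
  induction x using Quotient.induction_on with
  | _ x => exact hle mem_top

variable [FiniteDimensional K V]

theorem map_eq_of_le_comap (p : Submodule K V) (e : V ≃ₗ[K] V)
    (he : p ≤ p.comap (e : V →ₗ[K] V)) : p.map (e : V →ₗ[K] V) = p :=
  eq_of_le_of_finrank_eq (map_le_iff_le_comap.2 he) (e.finrank_map_eq p)

theorem trace_mapQ_eq_zero_of_sum_conj_eq_zero [CharZero K] {ι : Type*} (p : Submodule K V)
    {s : Finset ι} (hs : s.Nonempty) (e : ι → V ≃ₗ[K] V)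
    (he : ∀ i ∈ s, p ≤ p.comap (e i : V →ₗ[K] V)) {f : End K V} (hf : p ≤ p.comap f)
    (hsum : ∑ i ∈ s, (e i).conj f = 0) :
    trace K (V ⧸ p) (p.mapQ p f hf) = 0 := by
  have he' : ∀ i ∈ s, p.map (e i : V →ₗ[K] V) = p := fun i hi => p.map_eq_of_le_comap _ (he i hi)
  let F : s → compatibleMaps p p := fun i => ⟨(e i).conj f, p.le_comap_conj (he' i i.2) hf⟩
  have hF : ∑ i, F i = 0 := Subtype.ext (by simpa [F, ← Finset.sum_coe_sort s] using hsum)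
  have key : ∑ i, trace K (V ⧸ p) (mapQLinear p p (F i)) = 0 := by
    rw [← map_sum, ← map_sum, hF, map_zero, map_zero]
  have hconj : ∀ i, trace K (V ⧸ p) (mapQLinear p p (F i)) = trace K (V ⧸ p) (p.mapQ p f hf) :=
    fun i => p.trace_mapQ_conj (he' i i.2) hf
  simp only [hconj, sum_const, card_univ, Fintype.card_coe, nsmul_eq_mul] at key
  exact (mul_eq_zero.1 key).resolve_left (Nat.cast_ne_zero.2 hs.card_pos.ne')

end Submodule

namespace Module.End

variable {V : Type*} [AddCommGroup V] [Module ℂ V] [FiniteDimensional ℂ V]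

theorem re_trace_neg_of_forall_mem_spectrum [Nontrivial V] (f : End ℂ V)
    (hf : ∀ μ ∈ spectrum ℂ f, μ.re < 0) : (trace ℂ V f).re < 0 := by
  have hroots : ∀ μ ∈ f.charpoly.roots, μ.re < 0 := fun μ hμ =>
    hf μ ((mem_spectrum_iff_isRoot_charpoly f μ).2 (Polynomial.isRoot_of_mem_roots hμ))
  obtain ⟨μ, hμ⟩ := f.exists_eigenvalue
  have hmem : μ ∈ f.charpoly.roots := Polynomial.mem_roots'.2
    ⟨f.charpoly_monic.ne_zero, (hasEigenvalue_iff_isRoot_charpoly f μ).1 hμ⟩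
  have hne : f.charpoly.roots ≠ 0 := fun h => by simp [h] at hmem
  rw [trace_eq_sum_roots_charpoly_of_splits (IsAlgClosed.splits _), ← Complex.coe_reAddGroupHom,
    map_multiset_sum]
  simpa using Multiset.sum_lt_sum_of_nonempty hne hroots

theorem re_trace_mapQ_neg {f : End ℂ V} (hf : ⨆ j : ℤ, f.eigenspace (j : ℂ) = ⊤)
    {p : Submodule ℂ V} (hp : p = ⨆ j : ℕ, f.eigenspace (j : ℂ)) (hpt : p ≠ ⊤)
    (hfp : p ≤ p.comap f) : (trace ℂ (V ⧸ p) (p.mapQ p f hfp)).re < 0 := by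
  have : Nontrivial (V ⧸ p) := Submodule.Quotient.nontrivial_iff.2 hpt
  refine re_trace_neg_of_forall_mem_spectrum _ fun μ hμ => ?_
  obtain ⟨j, rfl, hj⟩ := p.exists_eq_not_le_of_mem_spectrum_mapQ (fun j : ℤ => (j : ℂ)) hf hfp hμ
  have hj0 : j < 0 := by
    by_contra! hj0
    lift j to ℕ using hj0
    exact hj (hp ▸ le_iSup (fun n : ℕ => f.eigenspace (n : ℂ)) j)
  simpa using hj0

end Module.End

theorem no_theta_stable_parabolic_general
    {L : Type*} [LieRing L] [LieAlgebra ℂ L] [Module.Finite ℂ L]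
    (m : ℕ) [NeZero m]
    (G : ZMod m → Submodule ℂ L)
    (hint : DirectSum.IsInternal G)
    (θ : L ≃ₗ⁅ℂ⁆ L)
    (hθ : ∀ l : ZMod m, ∀ x ∈ G l,
      θ x = Complex.exp (2 * Real.pi * Complex.I / m) ^ (l.val) • x)
    (H : LieSubalgebra ℂ L)
    (hHstable : ∀ h ∈ H, θ h ∈ H)
    (hH0 : H.toSubmodule ⊓ G 0 = ⊥)
    -- `Z` is the grading element of a `ℤ`-grading of `g`:
    (Z : L) (hZH : Z ∈ H)
    (hZint : DirectSum.IsInternal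
      (fun j : ℤ => Module.End.eigenspace (LieAlgebra.ad ℂ L Z) (j : ℂ)))
    -- `p = g(≥ 0)` is the associated parabolic subalgebra:
    (p : Submodule ℂ L)
    (hp : p = ⨆ j : ℕ, Module.End.eigenspace (LieAlgebra.ad ℂ L Z) (j : ℂ))
    (hproper : p ≠ ⊤) :
    ¬ (∀ x ∈ p, θ x ∈ p) := by
  intro hstab
  have hpow : ∀ k x, ((θ : L ≃ₗ[ℂ] L) ^ k) x = θ^[k] x := fun k x => LinearEquiv.pow_apply _ k x
  have horbit : ∑ k ∈ range m, ((θ : L ≃ₗ[ℂ] L) ^ k) Z = 0 := by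
    have hG0 := sum_pow_apply_mem_zero hint.submodule_iSup_eq_top
      (Complex.isPrimitiveRoot_exp m (NeZero.ne m)) (T := (θ : L →ₗ[ℂ] L)) hθ Z
    have hH : ∑ k ∈ range m, ((θ : L ≃ₗ[ℂ] L) ^ k) Z ∈ H :=
      sum_mem fun k _ => hpow k Z ▸ Set.MapsTo.iterate hHstable k hZH
    have hmem : ∑ k ∈ range m, ((θ : L ≃ₗ[ℂ] L) ^ k) Z ∈ H.toSubmodule ⊓ G 0 :=
      ⟨hH, by simpa [hpow, Module.End.pow_apply] using hG0⟩
    rwa [hH0, Submodule.mem_bot] at hmem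
  have hpZ : p ≤ p.comap (LieAlgebra.ad ℂ L Z) := hp ▸ Submodule.iSup_eigenspace_le_comap _ _
  have hpθ : ∀ k ∈ range m, p ≤ p.comap (((θ : L ≃ₗ[ℂ] L) ^ k : L ≃ₗ[ℂ] L) : L →ₗ[ℂ] L) :=
    fun k _ x hx => by simpa [hpow] using Set.MapsTo.iterate hstab k hx
  have htrace := p.trace_mapQ_eq_zero_of_sum_conj_eq_zero (nonempty_range_iff.2 (NeZero.ne m)) _
    hpθ hpZ (by simp_rw [LieAlgebra.conj_pow_ad, ← map_sum, horbit, map_zero])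
  have hneg := Module.End.re_trace_mapQ_neg hZint.submodule_iSup_eq_top hp hproper hpZ
  simp [htrace] at hneg

/-- in a complex semisimple `ℤ/m`-graded Lie algebra with homogeneous
(θ-stable) Cartan subalgebra `H` satisfying `h₀ = H ∩ g₀ = 0`, no proper parabolic
subalgebra `p = g(≥0)` associated to a grading element `Z ∈ H` is `θ`-stable. -/
theorem no_theta_stable_parabolic
    {L : Type*} [LieRing L] [LieAlgebra ℂ L] [Module.Finite ℂ L]
    [LieAlgebra.IsSemisimple ℂ L]
    (m : ℕ) [NeZero m]
    (G : ZMod m → Submodule ℂ L)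
    (hint : DirectSum.IsInternal G)
    (hbr : ∀ i j : ZMod m, ∀ x ∈ G i, ∀ y ∈ G j, ⁅x, y⁆ ∈ G (i + j))
    (θ : L ≃ₗ⁅ℂ⁆ L)
    (hθ : ∀ l : ZMod m, ∀ x ∈ G l,
      θ x = Complex.exp (2 * Real.pi * Complex.I / m) ^ (l.val) • x)
    (H : LieSubalgebra ℂ L) [H.IsCartanSubalgebra]
    (hHstable : ∀ h ∈ H, θ h ∈ H)
    (hH0 : H.toSubmodule ⊓ G 0 = ⊥)
    -- `Z` is the grading element of a `ℤ`-grading of `g`: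
    (Z : L) (hZH : Z ∈ H)
    (hZint : DirectSum.IsInternal
      (fun j : ℤ => Module.End.eigenspace (LieAlgebra.ad ℂ L Z) (j : ℂ)))
    -- `p = g(≥ 0)` is the associated parabolic subalgebra:
    (p : Submodule ℂ L)
    (hp : p = ⨆ j : ℕ, Module.End.eigenspace (LieAlgebra.ad ℂ L Z) (j : ℂ))
    (hproper : p ≠ ⊤) :
    ¬ (∀ x ∈ p, θ x ∈ p) :=
  no_theta_stable_parabolic_general m G hint θ hθ H hHstable hH0 Z hZH hZint p hp hproper
end
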